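/- For the exact constant-kernel solution with a = b = 1, the total mass is conserved and equals 2: for every t ≥ 0, M(t) := ∫₀^∞∫₀^∞ (v₁ + v₂) n(v₁,v₂,t) dv₁ dv₂ = 2, where n(v₁,v₂,t) = (e^{-v₁-v₂}/(1+t/2)²)·I₀(2√(v₁ v₂ t/(t+2))). -/

import Mathlib

open MeasureTheory

/-- The modified Bessel function of order zero, `I₀(x) = ∑_{k=0}^∞ (x/2)^{2k}/(k!)²`. -/
noncomputable def besselI0 (x : ℝ) : ℝ :=
  ∑' k : ℕ, (x / 2) ^ (2 * k) / ((Nat.factorial k : ℝ)) ^ 2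

/-- The exact constant-kernel solution with `a = b = 1`. -/
noncomputable def exactSol₁ (v₁ v₂ t : ℝ) : ℝ :=
  (Real.exp (-v₁ - v₂) / (1 + t / 2) ^ 2) *
    besselI0 (2 * Real.sqrt (v₁ * v₂ * t / (t + 2)))

lemma tsum_pow_div_fact (z : ℝ) : (∑' k : ℕ, z ^ k / (Nat.factorial k : ℝ)) = Real.exp z := by
  rw [Real.exp_eq_exp_ℝ, NormedSpace.exp_eq_tsum_div]

lemma summable_succ_mul (z : ℝ) (hz : 0 ≤ z) :
    Summable (fun k : ℕ => ((k : ℝ) + 1) * z ^ k / (Nat.factorial k : ℝ)) := by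
  refine Summable.of_nonneg_of_le (fun k => by positivity) (fun k => ?_)
    (Real.summable_pow_div_factorial (2 * z))
  have h1 : ((k : ℝ) + 1) ≤ 2 ^ k := by
    exact_mod_cast Nat.lt_two_pow_self (n := k)
  have : ((k : ℝ) + 1) * z ^ k ≤ (2 * z) ^ k := by
    rw [mul_pow]
    exact mul_le_mul_of_nonneg_right h1 (by positivity)
  exact div_le_div_of_nonneg_right this (by positivity) |>.trans_eq rfl

lemma tsum_succ_mul (z : ℝ) (hz : 0 ≤ z) :
    (∑' k : ℕ, ((k : ℝ) + 1) * z ^ k / (Nat.factorial k : ℝ)) = (1 + z) * Real.exp z := by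
  have hs1 := Real.summable_pow_div_factorial z
  have hf : Summable (fun k : ℕ => (k : ℝ) * z ^ k / (Nat.factorial k : ℝ)) := by
    refine ((summable_succ_mul z hz).sub hs1).congr fun k => ?_
    field_simp
    ring
  have h1 : (∑' k : ℕ, (k : ℝ) * z ^ k / (Nat.factorial k : ℝ)) = z * Real.exp z := by
    rw [Summable.tsum_eq_zero_add hf]
    have : ∀ k : ℕ, ((k + 1 : ℕ) : ℝ) * z ^ (k + 1) / (Nat.factorial (k + 1) : ℝ)
        = z * (z ^ k / (Nat.factorial k : ℝ)) := by
      intro k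
      rw [Nat.factorial_succ]
      push_cast
      have hk : (Nat.factorial k : ℝ) ≠ 0 := by positivity
      field_simp
      ring
    simp only [this]
    rw [tsum_mul_left, tsum_pow_div_fact]
    simp
  calc (∑' k : ℕ, ((k : ℝ) + 1) * z ^ k / (Nat.factorial k : ℝ))
      = ∑' k : ℕ, ((k : ℝ) * z ^ k / (Nat.factorial k : ℝ) + z ^ k / (Nat.factorial k : ℝ)) := by
        congr 1; funext k; ring
    _ = z * Real.exp z + Real.exp z := by rw [Summable.tsum_add hf hs1, h1, tsum_pow_div_fact]
    _ = (1 + z) * Real.exp z := by ring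

lemma integrableOn_pow_exp (n : ℕ) {r : ℝ} (hr : 0 < r) :
    IntegrableOn (fun y : ℝ => y ^ n * Real.exp (-(r * y))) (Set.Ioi 0) := by
  have h := integrableOn_rpow_mul_exp_neg_mul_rpow (s := (n : ℝ)) (p := 1)
    (by exact_mod_cast neg_one_lt_zero.trans_le (Nat.cast_nonneg n)) zero_lt_one hr
  simp_rw [Real.rpow_one, Real.rpow_natCast, neg_mul] at h
  simpa using h

lemma integral_pow_exp (n : ℕ) {r : ℝ} (hr : 0 < r) :
    ∫ y in Set.Ioi (0:ℝ), y ^ n * Real.exp (-(r * y)) = (Nat.factorial n : ℝ) / r ^ (n + 1) := by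
  have h := Real.integral_rpow_mul_exp_neg_mul_Ioi (a := (n : ℝ) + 1) (by positivity) hr
  rw [show ((n : ℝ) + 1 - 1) = (n : ℝ) by ring] at h
  simp_rw [Real.rpow_natCast] at h
  rw [show ((n : ℝ) + 1) = ((n + 1 : ℕ) : ℝ) by push_cast; ring, Real.rpow_natCast] at h
  rw [show ((n + 1 : ℕ) : ℝ) = (n : ℝ) + 1 by push_cast; ring, Real.Gamma_nat_eq_factorial] at h
  rw [h, div_pow, one_pow]
  ring

lemma besselI0_two_sqrt {u : ℝ} (hu : 0 ≤ u) :
    besselI0 (2 * Real.sqrt u) = ∑' k : ℕ, u ^ k / (Nat.factorial k : ℝ) ^ 2 := by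
  unfold besselI0
  congr 1; funext k
  rw [show (2 * Real.sqrt u / 2) = Real.sqrt u by ring, pow_mul, Real.sq_sqrt hu]

lemma inner_integral (x z : ℝ) (hx : 0 ≤ x) (hz : 0 ≤ z) :
    (∫ y in Set.Ioi (0:ℝ), (x + y) * Real.exp (-y) * besselI0 (2 * Real.sqrt (z * y)))
      = (x + 1 + z) * Real.exp z := by
  set F : ℕ → ℝ → ℝ := fun k y => z ^ k / (Nat.factorial k : ℝ) ^ 2 *
    (x * (y ^ k * Real.exp (-(1 * y))) + y ^ (k + 1) * Real.exp (-(1 * y))) with hF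
  have hFint : ∀ k, Integrable (F k) (volume.restrict (Set.Ioi 0)) := fun k =>
    (((integrableOn_pow_exp k one_pos).const_mul x).add
      (integrableOn_pow_exp (k + 1) one_pos)).const_mul _
  have hFval : ∀ k, (∫ y in Set.Ioi (0:ℝ), F k y)
      = x * (z ^ k / (Nat.factorial k : ℝ)) + ((k : ℝ) + 1) * z ^ k / (Nat.factorial k : ℝ) := by
    intro k
    have hk : (Nat.factorial k : ℝ) ≠ 0 := by positivity
    simp only [hF]
    rw [MeasureTheory.integral_const_mul, MeasureTheory.integral_add
      ((integrableOn_pow_exp k one_pos).const_mul x) (integrableOn_pow_exp (k + 1) one_pos),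
      MeasureTheory.integral_const_mul, integral_pow_exp k one_pos,
      integral_pow_exp (k + 1) one_pos, Nat.factorial_succ]
    push_cast
    field_simp
    ring
  have hFnonneg : ∀ k, ∀ y ∈ Set.Ioi (0:ℝ), 0 ≤ F k y := by
    intro k y hy
    have hy' : (0:ℝ) ≤ y := (le_of_lt hy)
    simp only [hF]
    positivity
  have hnorm : Summable fun k => ∫ y in Set.Ioi (0:ℝ), ‖F k y‖ := by
    have heq : ∀ k, (∫ y in Set.Ioi (0:ℝ), ‖F k y‖) = ∫ y in Set.Ioi (0:ℝ), F k y := by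
      intro k
      exact setIntegral_congr_fun measurableSet_Ioi fun y hy =>
        Real.norm_of_nonneg (hFnonneg k y hy)
    refine Summable.congr ?_ fun k => by rw [heq k, hFval k]
    exact ((Real.summable_pow_div_factorial z).mul_left x).add (summable_succ_mul z hz)
  have hcong : ∀ y ∈ Set.Ioi (0:ℝ),
      (x + y) * Real.exp (-y) * besselI0 (2 * Real.sqrt (z * y)) = ∑' k, F k y := by
    intro y hy
    rw [besselI0_two_sqrt (mul_nonneg hz (le_of_lt hy)), ← tsum_mul_left]
    congr 1; funext k
    simp only [hF, mul_pow, one_mul]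
    ring
  calc (∫ y in Set.Ioi (0:ℝ), (x + y) * Real.exp (-y) * besselI0 (2 * Real.sqrt (z * y)))
      = ∫ y in Set.Ioi (0:ℝ), ∑' k, F k y :=
        setIntegral_congr_fun measurableSet_Ioi hcong
    _ = ∑' k, ∫ y in Set.Ioi (0:ℝ), F k y :=
        (integral_tsum_of_summable_integral_norm hFint hnorm).symm
    _ = (x + 1 + z) * Real.exp z := by
        have := Summable.tsum_add (((Real.summable_pow_div_factorial z).mul_left x))
          (summable_succ_mul z hz)
        simp only [hFval]
        rw [this, tsum_mul_left, tsum_pow_div_fact, tsum_succ_mul z hz]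
        ring

/-- The total mass for the exact constant-kernel solution with `a = b = 1` is
conserved and equals `2`. -/
theorem total_mass_exactSol (t : ℝ) (ht : 0 ≤ t) :
    (∫ v₁ in Set.Ioi (0:ℝ), ∫ v₂ in Set.Ioi (0:ℝ), (v₁ + v₂) * exactSol₁ v₁ v₂ t) = 2 := by
  have ht2 : (0:ℝ) < t + 2 := by linarith
  set c := t / (t + 2) with hcdef
  have hc0 : 0 ≤ c := div_nonneg ht ht2.le
  have hc1 : c < 1 := (div_lt_one ht2).mpr (by linarith)
  have hr : 0 < 1 - c := by linarith
  set K := 1 / (1 + t / 2) ^ 2 with hK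
  have hinner : ∀ x ∈ Set.Ioi (0:ℝ),
      (∫ v₂ in Set.Ioi (0:ℝ), (x + v₂) * exactSol₁ x v₂ t)
        = (K * (1 + c)) * (x ^ 1 * Real.exp (-((1 - c) * x)))
          + K * (x ^ 0 * Real.exp (-((1 - c) * x))) := by
    intro x hx
    have hx0 : 0 ≤ x := le_of_lt hx
    have step1 : ∀ y ∈ Set.Ioi (0:ℝ), (x + y) * exactSol₁ x y t
        = (K * Real.exp (-x)) *
          ((x + y) * Real.exp (-y) * besselI0 (2 * Real.sqrt ((x * c) * y))) := by
      intro y hy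
      unfold exactSol₁
      rw [show x * y * t / (t + 2) = (x * c) * y by rw [hcdef]; ring,
        show -x - y = -x + -y by ring, Real.exp_add, hK]
      ring
    rw [setIntegral_congr_fun measurableSet_Ioi step1, MeasureTheory.integral_const_mul,
      inner_integral x (x * c) hx0 (mul_nonneg hx0 hc0)]
    have hexp : Real.exp (-x) * Real.exp (x * c) = Real.exp (-((1 - c) * x)) := by
      rw [← Real.exp_add]; ring_nf
    calc K * Real.exp (-x) * ((x + 1 + x * c) * Real.exp (x * c))
        = (K * (1 + c) * x + K) * (Real.exp (-x) * Real.exp (x * c)) := by ring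
      _ = _ := by rw [hexp]; ring
  rw [setIntegral_congr_fun measurableSet_Ioi hinner, MeasureTheory.integral_add
    ((integrableOn_pow_exp 1 hr).const_mul _) ((integrableOn_pow_exp 0 hr).const_mul _),
    MeasureTheory.integral_const_mul, MeasureTheory.integral_const_mul,
    integral_pow_exp 1 hr, integral_pow_exp 0 hr]
  have h12 : (0:ℝ) < 1 + t / 2 := by linarith
  rw [hK, hcdef]
  have h1 : (1 - t / (t + 2)) ≠ 0 := by
    rw [hcdef] at hr; exact ne_of_gt hr
  norm_num [Nat.factorial]
  field_simp
  ring
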